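/- Let P(B,A,Φ) be a trivial quantum principal bundle and β : A → Γ_B linear with β(1)=0. Then ω(a) = Σ Φ⁻¹(a₍₁₎) j(β(a₍₂₎)) Φ(a₍₃₎) + Σ Φ⁻¹(a₍₁₎) dΦ(a₍₂₎) satisfies the three connection-form conditions: ω(1)=0, ~(ω(a)) = 1⊗a − ε(a)⊗1, and Δ_R∘ω = (ω⊗id)∘Ad_R. -/

import Mathlib

open TensorProduct

noncomputable def AdR (k A : Type*) [Field k] [Ring A] [HopfAlgebra k A] :
    A →ₗ[k] A ⊗[k] A :=
  (LinearMap.lTensor A (LinearMap.mul' k A)) ∘ₗ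
    (TensorProduct.assoc k A A A).toLinearMap ∘ₗ
    (LinearMap.rTensor A (TensorProduct.comm k A A).toLinearMap) ∘ₗ
    (TensorProduct.assoc k A A A).symm.toLinearMap ∘ₗ
    (LinearMap.rTensor (A ⊗[k] A) (HopfAlgebra.antipode (R := k) (A := A))) ∘ₗ
    (LinearMap.lTensor A (Coalgebra.comul (R := k) (A := A))) ∘ₗ
    (Coalgebra.comul (R := k) (A := A))

noncomputable def dUniv (k P : Type*) [Field k] [Ring P] [Algebra k P] :
    P →ₗ[k] P ⊗[k] P :=
  TensorProduct.mk k P P 1 - (TensorProduct.mk k P P).flip 1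

noncomputable def leftAct (k P : Type*) [Field k] [Ring P] [Algebra k P] :
    P ⊗[k] (P ⊗[k] P) →ₗ[k] P ⊗[k] P :=
  (LinearMap.rTensor P (LinearMap.mul' k P)) ∘ₗ
    (TensorProduct.assoc k P P P).symm.toLinearMap

noncomputable def rightAct (k P : Type*) [Field k] [Ring P] [Algebra k P] :
    (P ⊗[k] P) ⊗[k] P →ₗ[k] P ⊗[k] P :=
  (LinearMap.lTensor P (LinearMap.mul' k P)) ∘ₗ
    (TensorProduct.assoc k P P P).toLinearMap

noncomputable def tildeMap {k A P : Type*} [Field k] [Ring A] [HopfAlgebra k A]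
    [Ring P] [Algebra k P] (ΔR : P →ₐ[k] P ⊗[k] A) :
    P ⊗[k] P →ₗ[k] P ⊗[k] A :=
  (LinearMap.rTensor A (LinearMap.mul' k P)) ∘ₗ
    (TensorProduct.assoc k P P A).symm.toLinearMap ∘ₗ
    (LinearMap.lTensor P ΔR.toLinearMap)

noncomputable def diagCoaction {k A P : Type*} [Field k] [Ring A] [HopfAlgebra k A]
    [Ring P] [Algebra k P] (ΔR : P →ₐ[k] P ⊗[k] A) :
    P ⊗[k] P →ₗ[k] (P ⊗[k] P) ⊗[k] A :=
  (LinearMap.lTensor (P ⊗[k] P) (LinearMap.mul' k A)) ∘ₗ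
    (TensorProduct.tensorTensorTensorComm k P A P A).toLinearMap ∘ₗ
    (TensorProduct.map ΔR.toLinearMap ΔR.toLinearMap)


/-! Everything is computed in convolution algebras `WithConv (A →ₗ[k] R)`. There
`ω = Φ⁻¹ ⋆ (β + 1) ⋆ Φ - 1`, with `Φ⁻¹` and `Φ` pushed into `P ⊗ P` along `p ↦ p ⊗ 1` and
`p ↦ 1 ⊗ p`. Both `~` and the diagonal coaction have the form `x ⊗ y ↦ F x * G y` for algebra
maps `F`, `G`, so they carry such a sandwich to `F Φ⁻¹ ⋆ (image of β + 1) ⋆ G Φ`. The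
intertwining property reads `Δ_R ∘ Φ = Φ ⋆ (1 ⊗ id)`, and uniqueness of convolution inverses
turns it into `Δ_R ∘ Φ⁻¹ = (1 ⊗ S) ⋆ Φ⁻¹`. Hence `~ω = (Φ⁻¹ ⋆ Φ) ⋆ (1 ⊗ id) - 1 = 1 ⊗ id - 1`,
and the coaction of `ω` is `(1 ⊗ S) ⋆ ω ⋆ (1 ⊗ id)`, which is `(ω ⊗ id) ∘ Ad_R`. -/

open Coalgebra WithConv
open Algebra.TensorProduct (includeLeft includeRight)

lemma mul_sub_one_mul_of_mul_eq_one {R : Type*} [Ring R] {s r : R} (h : s * r = 1) (x : R) :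
    s * (x - 1) * r = s * x * r - 1 := by
  rw [mul_sub_one, sub_mul, h]

namespace LinearMap

section convComp

variable {R C M N : Type*} [CommSemiring R] [AddCommMonoid C] [Module R C]
  [AddCommMonoid M] [Module R M] [AddCommMonoid N] [Module R N]

def convComp (D : M →ₗ[R] N) : WithConv (C →ₗ[R] M) →+ WithConv (C →ₗ[R] N) where
  toFun x := toConv (D ∘ₗ x.ofConv)
  map_zero' := by simp
  map_add' x y := by simp [comp_add]

@[simp] lemma ofConv_convComp (D : M →ₗ[R] N) (x : WithConv (C →ₗ[R] M)) :
    (convComp D x).ofConv = D ∘ₗ x.ofConv :=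
  rfl

lemma convComp_comp {L : Type*} [AddCommMonoid L] [Module R L] (D : M →ₗ[R] N) (E : L →ₗ[R] M)
    (x : WithConv (C →ₗ[R] L)) : convComp (D ∘ₗ E) x = convComp D (convComp E x) :=
  rfl

lemma convComp_sub {M N : Type*} [AddCommGroup M] [Module R M] [AddCommGroup N] [Module R N]
    (D : M →ₗ[R] N) (x y : WithConv (C →ₗ[R] M)) :
    convComp D (x - y) = convComp D x - convComp D y :=
  map_sub _ x y

variable {S T : Type*} [Semiring S] [Algebra R S] [Semiring T] [Algebra R T] [Coalgebra R C]

lemma convComp_one (D : S →ₗ[R] T) (hD : D 1 = 1) :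
    convComp D (1 : WithConv (C →ₗ[R] S)) = 1 := by
  ext c
  simp [Algebra.algebraMap_eq_smul_one, hD]

lemma convComp_algHom_one (φ : S →ₐ[R] T) :
    convComp φ.toLinearMap (1 : WithConv (C →ₗ[R] S)) = 1 :=
  convComp_one _ (map_one φ)

lemma convComp_mul (φ : S →ₐ[R] T) (x y : WithConv (C →ₗ[R] S)) :
    convComp φ.toLinearMap (x * y) = convComp φ.toLinearMap x * convComp φ.toLinearMap y :=
  WithConv.ofConv_injective (algHom_comp_convMul_distrib φ x y)

lemma convComp_mul_of_map_mul_left (D : S →ₗ[R] T) (ι : M →ₗ[R] S) (κ : M →ₗ[R] T)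
    (hD : ∀ m s, D (ι m * s) = κ m * D s) (x : WithConv (C →ₗ[R] M))
    (y : WithConv (C →ₗ[R] S)) :
    convComp D (convComp ι x * y) = convComp κ x * convComp D y := by
  ext c
  simp [(ℛ R c).convMul_apply, hD]

lemma convComp_mul_of_map_mul_right (D : S →ₗ[R] T) (ι : M →ₗ[R] S) (κ : M →ₗ[R] T)
    (hD : ∀ s m, D (s * ι m) = D s * κ m) (y : WithConv (C →ₗ[R] S))
    (x : WithConv (C →ₗ[R] M)) :
    convComp D (y * convComp ι x) = convComp D y * convComp κ x := by
  ext c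
  simp [(ℛ R c).convMul_apply, hD]

end convComp

variable {R : Type*} [CommSemiring R]

lemma convMul_apply_one {B S : Type*} [Semiring B] [Bialgebra R B] [Semiring S] [Algebra R S]
    (x y : WithConv (B →ₗ[R] S)) : (x * y) 1 = x 1 * y 1 := by
  simp [Algebra.TensorProduct.one_def]

lemma toConv_rTensor_comp_comul {B S : Type*} [Semiring B] [Bialgebra R B] [Semiring S]
    [Algebra R S] (f : B →ₗ[R] S) :
    toConv (f.rTensor B ∘ₗ comul) =
      convComp includeLeft.toLinearMap (toConv f) * toConv includeRight.toLinearMap := by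
  ext b
  simp [(ℛ R b).convMul_apply, ← (ℛ R b).eq]

section Intertwiner

variable {A P T : Type*} [Semiring A] [HopfAlgebra R A] [Semiring P] [Algebra R P]
  [Semiring T] [Algebra R T]

lemma convComp_antipode_mul_toConv (φ : A →ₐ[R] T) :
    convComp φ.toLinearMap (toConv (HopfAlgebra.antipode R)) * toConv φ.toLinearMap = 1 := by
  rw [← convComp_algHom_one φ, ← antipode_mul_id, convComp_mul]
  rfl

variable (ΔR : P →ₐ[R] P ⊗[R] A) {Φ Φinv : WithConv (A →ₗ[R] P)}

lemma convComp_of_intertwiner (hint : ΔR.toLinearMap ∘ₗ Φ.ofConv = Φ.ofConv.rTensor A ∘ₗ comul) :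
    convComp ΔR.toLinearMap Φ =
      convComp includeLeft.toLinearMap Φ * toConv includeRight.toLinearMap := by
  rw [← toConv_rTensor_comp_comul, ← hint]
  rfl

lemma convComp_convInv_of_intertwiner
    (hint : ΔR.toLinearMap ∘ₗ Φ.ofConv = Φ.ofConv.rTensor A ∘ₗ comul)
    (hΦ₁ : Φ * Φinv = 1) (hΦ₂ : Φinv * Φ = 1) :
    convComp ΔR.toLinearMap Φinv =
      convComp includeRight.toLinearMap (toConv (HopfAlgebra.antipode R)) *
        convComp includeLeft.toLinearMap Φinv := by
  refine (left_inv_eq_right_inv (a := convComp ΔR.toLinearMap Φ) ?_ ?_).symm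
  · rw [convComp_of_intertwiner ΔR hint, mul_assoc, ← mul_assoc _ (convComp _ Φ),
      ← convComp_mul, hΦ₂, convComp_algHom_one, one_mul, convComp_antipode_mul_toConv]
  · rw [← convComp_mul, hΦ₁, convComp_algHom_one]

end Intertwiner

section TensorForm

variable {C P Q T : Type*} [AddCommMonoid C] [Module R C] [Coalgebra R C]
  [Semiring P] [Algebra R P] [Semiring Q] [Algebra R Q] [Semiring T] [Algebra R T]
  {D : P ⊗[R] Q →ₗ[R] T} {F : P →ₐ[R] T} {G : Q →ₐ[R] T}

lemma map_tmul_one_mul_of_tmul (hD : ∀ x y, D (x ⊗ₜ y) = F x * G y) (p : P)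
    (m : P ⊗[R] Q) : D (p ⊗ₜ 1 * m) = F p * D m := by
  induction m using TensorProduct.induction_on with
  | zero => simp
  | tmul x y => simp [hD, mul_assoc]
  | add m m' hm hm' => simp [mul_add, hm, hm']

lemma map_mul_one_tmul_of_tmul (hD : ∀ x y, D (x ⊗ₜ y) = F x * G y) (m : P ⊗[R] Q)
    (q : Q) : D (m * 1 ⊗ₜ q) = D m * G q := by
  induction m using TensorProduct.induction_on with
  | zero => simp
  | tmul x y => simp [hD, mul_assoc]
  | add m m' hm hm' => simp [add_mul, hm, hm']

lemma convComp_includeLeft_mul_mul_includeRight (hD : ∀ x y, D (x ⊗ₜ y) = F x * G y)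
    (φ : WithConv (C →ₗ[R] P)) (X : WithConv (C →ₗ[R] P ⊗[R] Q)) (ψ : WithConv (C →ₗ[R] Q)) :
    convComp D (convComp includeLeft.toLinearMap φ * X * convComp includeRight.toLinearMap ψ) =
      convComp F.toLinearMap φ * convComp D X * convComp G.toLinearMap ψ := by
  rw [convComp_mul_of_map_mul_right D _ G.toLinearMap fun m q ↦ map_mul_one_tmul_of_tmul hD m q,
    convComp_mul_of_map_mul_left D _ F.toLinearMap fun p m ↦ map_tmul_one_mul_of_tmul hD p m]

lemma convComp_one_of_tmul (hD : ∀ x y, D (x ⊗ₜ y) = F x * G y) :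
    convComp D (1 : WithConv (C →ₗ[R] P ⊗[R] Q)) = 1 :=
  convComp_one D (by simp [Algebra.TensorProduct.one_def, hD])

end TensorForm

end LinearMap

open LinearMap

section TrivialBundle

variable {k A P : Type*} [Field k] [Ring A] [HopfAlgebra k A] [Ring P] [Algebra k P]

lemma rTensor_comp_AdR {M : Type*} [Ring M] [Algebra k M] (f : A →ₗ[k] M) :
    toConv (f.rTensor A ∘ₗ AdR k A) =
      convComp includeRight.toLinearMap (toConv (HopfAlgebra.antipode k)) *
        convComp includeLeft.toLinearMap (toConv f) * toConv includeRight.toLinearMap := by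
  rw [mul_assoc]
  apply WithConv.ofConv_injective
  simp only [AdR, LinearMap.convMul_def, ofConv_toConv, ofConv_convComp, ← comp_assoc]
  rw [← map_comp_lTensor]
  simp only [← comp_assoc]
  congr 2
  ext a b c
  simp

lemma leftAct_tmul (p : P) (m : P ⊗[k] P) : leftAct k P (p ⊗ₜ m) = p ⊗ₜ 1 * m := by
  induction m using TensorProduct.induction_on with
  | zero => simp
  | tmul x y => simp [leftAct]
  | add m m' hm hm' => simp [tmul_add, mul_add, hm, hm']

lemma rightAct_tmul (m : P ⊗[k] P) (q : P) : rightAct k P (m ⊗ₜ q) = m * 1 ⊗ₜ q := by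
  induction m using TensorProduct.induction_on with
  | zero => simp
  | tmul x y => simp [rightAct]
  | add m m' hm hm' => simp [add_tmul, add_mul, hm, hm']

lemma leftAct_comp_map_comp_comul (x : A →ₗ[k] P) (Y : A →ₗ[k] P ⊗[k] P) :
    leftAct k P ∘ₗ TensorProduct.map x Y ∘ₗ comul =
      (convComp (includeLeft : P →ₐ[k] P ⊗[k] P).toLinearMap (toConv x) * toConv Y).ofConv := by
  ext a
  simp [(ℛ k a).convMul_apply, ← (ℛ k a).eq, leftAct_tmul]

lemma rightAct_comp_map_comp_comul (Y : A →ₗ[k] P ⊗[k] P) (x : A →ₗ[k] P) :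
    rightAct k P ∘ₗ TensorProduct.map Y x ∘ₗ comul =
      (toConv Y * convComp (includeRight : P →ₐ[k] P ⊗[k] P).toLinearMap (toConv x)).ofConv := by
  ext a
  simp [(ℛ k a).convMul_apply, ← (ℛ k a).eq, rightAct_tmul]

lemma tildeMap_tmul (ΔR : P →ₐ[k] P ⊗[k] A) (x y : P) :
    tildeMap ΔR (x ⊗ₜ y) = x ⊗ₜ 1 * ΔR y := by
  simp only [tildeMap, coe_comp, Function.comp_apply, lTensor_tmul, AlgHom.toLinearMap_apply]
  generalize ΔR y = w
  induction w using TensorProduct.induction_on with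
  | zero => simp
  | tmul q a => simp
  | add w w' hw hw' => simp only [tmul_add, map_add, hw, hw', mul_add]

lemma diagCoaction_tmul (ΔR : P →ₐ[k] P ⊗[k] A) (x y : P) :
    diagCoaction ΔR (x ⊗ₜ y) =
      (Algebra.TensorProduct.map (includeLeft : P →ₐ[k] P ⊗[k] P) (AlgHom.id k A)).comp ΔR x *
      (Algebra.TensorProduct.map (includeRight : P →ₐ[k] P ⊗[k] P) (AlgHom.id k A)).comp ΔR y := by
  simp only [diagCoaction, coe_comp, Function.comp_apply, map_tmul, AlgHom.toLinearMap_apply,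
    AlgHom.comp_apply]
  generalize ΔR x = u, ΔR y = w
  induction u using TensorProduct.induction_on with
  | zero => simp
  | tmul p a =>
    induction w using TensorProduct.induction_on with
    | zero => simp
    | tmul q b => simp
    | add w w' hw hw' => simp only [tmul_add, map_add, hw, hw', mul_add]
  | add u u' hu hu' => simp only [add_tmul, map_add, hu, hu', add_mul]

/-- Since `dΦ = 1 ⊗ Φ - Φ ⊗ 1` and `Φ⁻¹ ⋆ Φ = 1`, this is the paper's
`Φ⁻¹ (j ∘ β) Φ + Φ⁻¹ dΦ` (see `gaugeConnectionForm_eq`). -/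
noncomputable def gaugeConnectionForm (Φ Φinv : A →ₗ[k] P) (β : A →ₗ[k] P ⊗[k] P) :
    WithConv (A →ₗ[k] P ⊗[k] P) :=
  convComp (includeLeft : P →ₐ[k] P ⊗[k] P).toLinearMap (toConv Φinv) * (toConv β + 1) *
    convComp (includeRight : P →ₐ[k] P ⊗[k] P).toLinearMap (toConv Φ) - 1

variable {Φ Φinv : A →ₗ[k] P} {β : A →ₗ[k] P ⊗[k] P}

lemma gaugeConnectionForm_eq (hΦ : toConv Φinv * toConv Φ = 1) :
    leftAct k P ∘ₗ TensorProduct.map Φinv (rightAct k P ∘ₗ TensorProduct.map β Φ) ∘ₗ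
        comul.lTensor A ∘ₗ comul +
      leftAct k P ∘ₗ TensorProduct.map Φinv (dUniv k P ∘ₗ Φ) ∘ₗ comul =
    (gaugeConnectionForm Φ Φinv β).ofConv := by
  have hd : toConv (dUniv k P ∘ₗ Φ) =
      convComp (includeRight : P →ₐ[k] P ⊗[k] P).toLinearMap (toConv Φ) -
        convComp includeLeft.toLinearMap (toConv Φ) := by
    ext a
    simp [dUniv]
  have hΦinvΦ : convComp (includeLeft : P →ₐ[k] P ⊗[k] P).toLinearMap (toConv Φinv) *
      convComp includeLeft.toLinearMap (toConv Φ) = 1 := by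
    rw [← convComp_mul, hΦ, convComp_algHom_one]
  rw [← comp_assoc comul, map_comp_lTensor, comp_assoc, rightAct_comp_map_comp_comul,
    leftAct_comp_map_comp_comul, leftAct_comp_map_comp_comul, hd, ← ofConv_add,
    gaugeConnectionForm, mul_sub, hΦinvΦ, mul_add, mul_one, add_mul, mul_assoc, add_sub_assoc]

lemma gaugeConnectionForm_apply_one (hΦone : Φ 1 = 1) (hΦ : toConv Φinv * toConv Φ = 1)
    (hβone : β 1 = 0) : gaugeConnectionForm Φ Φinv β 1 = 0 := by
  have hΦinv : Φinv 1 = 1 := by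
    have h := congr($hΦ 1)
    rw [convMul_apply_one] at h
    simpa [hΦone] using h
  simp [gaugeConnectionForm, hΦinv, hΦone, hβone, Algebra.TensorProduct.one_def]

section TensorForm

variable {T : Type*} [Ring T] [Algebra k T] {D : P ⊗[k] P →ₗ[k] T} {F G : P →ₐ[k] T}

lemma convComp_gaugeConnectionForm_of_tmul (hD : ∀ x y, D (x ⊗ₜ y) = F x * G y) :
    convComp D (gaugeConnectionForm Φ Φinv β) =
      convComp F.toLinearMap (toConv Φinv) * (convComp D (toConv β) + 1) *
        convComp G.toLinearMap (toConv Φ) - 1 := by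
  rw [gaugeConnectionForm, convComp_sub, convComp_includeLeft_mul_mul_includeRight hD, map_add,
    convComp_one_of_tmul hD]

lemma convComp_gaugeConnectionForm_eq_conj (hD : ∀ x y, D (x ⊗ₜ y) = F x * G y)
    (ι : P ⊗[k] P →ₐ[k] T) {s r : WithConv (A →ₗ[k] T)} (hsr : s * r = 1)
    (hF : convComp F.toLinearMap (toConv Φinv) =
      s * convComp ι.toLinearMap (convComp includeLeft.toLinearMap (toConv Φinv)))
    (hG : convComp G.toLinearMap (toConv Φ) =
      convComp ι.toLinearMap (convComp includeRight.toLinearMap (toConv Φ)) * r)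
    (hβ : convComp D (toConv β) = convComp ι.toLinearMap (toConv β)) :
    convComp D (gaugeConnectionForm Φ Φinv β) =
      s * convComp ι.toLinearMap (gaugeConnectionForm Φ Φinv β) * r := by
  rw [convComp_gaugeConnectionForm_of_tmul hD, hF, hG, hβ, gaugeConnectionForm, convComp_sub,
    convComp_algHom_one, mul_sub_one_mul_of_mul_eq_one hsr]
  simp only [convComp_mul, map_add, convComp_algHom_one, mul_assoc]

end TensorForm

variable (ΔR : P →ₐ[k] P ⊗[k] A)

lemma convComp_tildeMap_gaugeConnectionForm
    (hint : ΔR.toLinearMap ∘ₗ Φ = Φ.rTensor A ∘ₗ comul) (hΦ : toConv Φinv * toConv Φ = 1)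
    (hβ : tildeMap ΔR ∘ₗ β = 0) :
    convComp (tildeMap ΔR) (gaugeConnectionForm Φ Φinv β) =
      toConv includeRight.toLinearMap - 1 := by
  rw [convComp_gaugeConnectionForm_of_tmul (F := includeLeft) (tildeMap_tmul ΔR),
    show convComp (tildeMap ΔR) (toConv β) = 0 from congr(toConv $hβ), zero_add, mul_one,
    convComp_of_intertwiner ΔR hint, ← mul_assoc, ← convComp_mul, hΦ, convComp_algHom_one,
    one_mul]

lemma convComp_diagCoaction_gaugeConnectionForm
    (hint : ΔR.toLinearMap ∘ₗ Φ = Φ.rTensor A ∘ₗ comul) (hΦ₁ : toConv Φ * toConv Φinv = 1)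
    (hΦ₂ : toConv Φinv * toConv Φ = 1) (hβ : ∀ a, diagCoaction ΔR (β a) = β a ⊗ₜ 1) :
    convComp (diagCoaction ΔR) (gaugeConnectionForm Φ Φinv β) =
      convComp includeRight.toLinearMap (toConv (HopfAlgebra.antipode k)) *
        convComp includeLeft.toLinearMap (gaugeConnectionForm Φ Φinv β) *
          toConv includeRight.toLinearMap := by
  refine convComp_gaugeConnectionForm_eq_conj (diagCoaction_tmul ΔR) _
    (convComp_antipode_mul_toConv _) ?_ ?_ (by ext a; simp [hβ])
  · rw [AlgHom.comp_toLinearMap, convComp_comp, convComp_convInv_of_intertwiner ΔR hint hΦ₁ hΦ₂,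
      convComp_mul]
    congr 1
  · rw [AlgHom.comp_toLinearMap, convComp_comp, convComp_of_intertwiner ΔR hint, convComp_mul]
    congr 1

end TrivialBundle

theorem connection_form_from_gauge_field_general
    {k A P : Type*} [Field k] [Ring A] [HopfAlgebra k A]
    [Ring P] [Algebra k P]
    (ΔR : P →ₐ[k] P ⊗[k] A)
    (Φ Φinv : A →ₗ[k] P)
    (hint : ΔR.toLinearMap ∘ₗ Φ = (Φ.rTensor A) ∘ₗ Coalgebra.comul)
    (hΦone : Φ 1 = 1)
    (hΦ₁ : (LinearMap.mul' k P) ∘ₗ (TensorProduct.map Φ Φinv) ∘ₗ Coalgebra.comul =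
        (Algebra.linearMap k P) ∘ₗ Coalgebra.counit)
    (hΦ₂ : (LinearMap.mul' k P) ∘ₗ (TensorProduct.map Φinv Φ) ∘ₗ Coalgebra.comul =
        (Algebra.linearMap k P) ∘ₗ Coalgebra.counit)
    -- β : A → Γ_B (included into Γ_P = P⊗P): horizontal, invariant, β(1)=0
    (β : A →ₗ[k] P ⊗[k] P)
    (hβhor : tildeMap ΔR ∘ₗ β = 0)
    (hβinv : ∀ a : A, diagCoaction ΔR (β a) = (β a) ⊗ₜ[k] 1)
    (hβone : β 1 = 0) :
    let ωtriv : A →ₗ[k] P ⊗[k] P :=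
      (leftAct k P) ∘ₗ (TensorProduct.map Φinv ((dUniv k P) ∘ₗ Φ)) ∘ₗ
        Coalgebra.comul
    let ω : A →ₗ[k] P ⊗[k] P :=
      (leftAct k P) ∘ₗ
        (TensorProduct.map Φinv ((rightAct k P) ∘ₗ (TensorProduct.map β Φ))) ∘ₗ
        (LinearMap.lTensor A (Coalgebra.comul (R := k) (A := A))) ∘ₗ
        (Coalgebra.comul (R := k) (A := A)) + ωtriv
    (ω 1 = 0) ∧
    (tildeMap ΔR ∘ₗ ω =
      TensorProduct.mk k P A 1 -
        (Algebra.linearMap k (P ⊗[k] A)) ∘ₗ Coalgebra.counit) ∧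
    (diagCoaction ΔR ∘ₗ ω = (ω.rTensor A) ∘ₗ AdR k A) := by
  intro ωtriv ω
  have hΦ₁' : toConv Φ * toConv Φinv = 1 := WithConv.ofConv_injective hΦ₁
  have hΦ₂' : toConv Φinv * toConv Φ = 1 := WithConv.ofConv_injective hΦ₂
  have hω : toConv ω = gaugeConnectionForm Φ Φinv β :=
    congr(toConv $(gaugeConnectionForm_eq hΦ₂'))
  refine ⟨?_, ?_, ?_⟩
  · exact congr($hω 1).trans (gaugeConnectionForm_apply_one hΦone hΦ₂' hβone)
  · apply WithConv.toConv_injective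
    change convComp (tildeMap ΔR) (toConv ω) = _
    rw [hω, convComp_tildeMap_gaugeConnectionForm ΔR hint hΦ₂' hβhor]
    rfl
  · apply WithConv.toConv_injective
    change convComp (diagCoaction ΔR) (toConv ω) = _
    rw [rTensor_comp_AdR, hω]
    exact convComp_diagCoaction_gaugeConnectionForm ΔR hint hΦ₁' hΦ₂' hβinv

theorem connection_form_from_gauge_field
    {k A P : Type*} [Field k] [Ring A] [HopfAlgebra k A]
    [Ring P] [Algebra k P]
    (ΔR : P →ₐ[k] P ⊗[k] A)
    (hcoassoc : (TensorProduct.assoc k P A A).toLinearMap ∘ₗ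
        (ΔR.toLinearMap.rTensor A) ∘ₗ ΔR.toLinearMap =
        ((Coalgebra.comul (R := k) (A := A)).lTensor P) ∘ₗ ΔR.toLinearMap)
    (hcounit : (TensorProduct.rid k P).toLinearMap ∘ₗ
        ((Coalgebra.counit (R := k) (A := A)).lTensor P) ∘ₗ ΔR.toLinearMap =
        LinearMap.id)
    (Φ Φinv : A →ₗ[k] P)
    (hint : ΔR.toLinearMap ∘ₗ Φ = (Φ.rTensor A) ∘ₗ Coalgebra.comul)
    (hΦone : Φ 1 = 1)
    (hΦ₁ : (LinearMap.mul' k P) ∘ₗ (TensorProduct.map Φ Φinv) ∘ₗ Coalgebra.comul =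
        (Algebra.linearMap k P) ∘ₗ Coalgebra.counit)
    (hΦ₂ : (LinearMap.mul' k P) ∘ₗ (TensorProduct.map Φinv Φ) ∘ₗ Coalgebra.comul =
        (Algebra.linearMap k P) ∘ₗ Coalgebra.counit)
    -- β : A → Γ_B (included into Γ_P = P⊗P): horizontal, invariant, β(1)=0
    (β : A →ₗ[k] P ⊗[k] P)
    (hβhor : tildeMap ΔR ∘ₗ β = 0)
    (hβinv : ∀ a : A, diagCoaction ΔR (β a) = (β a) ⊗ₜ[k] 1)
    (hβone : β 1 = 0) :
    let ωtriv : A →ₗ[k] P ⊗[k] P :=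
      (leftAct k P) ∘ₗ (TensorProduct.map Φinv ((dUniv k P) ∘ₗ Φ)) ∘ₗ
        Coalgebra.comul
    let ω : A →ₗ[k] P ⊗[k] P :=
      (leftAct k P) ∘ₗ
        (TensorProduct.map Φinv ((rightAct k P) ∘ₗ (TensorProduct.map β Φ))) ∘ₗ
        (LinearMap.lTensor A (Coalgebra.comul (R := k) (A := A))) ∘ₗ
        (Coalgebra.comul (R := k) (A := A)) + ωtriv
    (ω 1 = 0) ∧
    (tildeMap ΔR ∘ₗ ω =
      TensorProduct.mk k P A 1 -
        (Algebra.linearMap k (P ⊗[k] A)) ∘ₗ Coalgebra.counit) ∧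
    (diagCoaction ΔR ∘ₗ ω = (ω.rTensor A) ∘ₗ AdR k A) :=
  connection_form_from_gauge_field_general ΔR Φ Φinv hint hΦone hΦ₁ hΦ₂ β hβhor hβinv hβone
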